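/- arXiv:2408.00183 — 2 statements merged into one kernel-verified Lean document; each statement's English description precedes it below -/
import Mathlib

section
/- If K is a field, F/K a field extension containing no finite extension of K other than K itself (i.e. every element of F algebraic over K lies in K), and U, V are nonzero finite-dimensional K-subspaces of F, then dim_K(UV) ≥ dim_K U + dim_K V − 1, where UV denotes the K-linear span of all products uv with u ∈ U, v ∈ V. -/
open Module Submodule

section Aux

variable {K F : Type*} [Field K] [Field F] [Algebra K F]

/-- If multiplication by `x` stabilizes a nonzero finite-dimensional `K`-subspace of `F`,
then `x` is algebraic over `K`. -/
lemma isAlgebraic_of_mul_stab (U : Submodule K F) [FiniteDimensional K U]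
    (hU : U ≠ ⊥) (x : F) (hx : ∀ u ∈ U, x * u ∈ U) : IsAlgebraic K x := by
  obtain ⟨u₀, hu₀U, hu₀⟩ := Submodule.exists_mem_ne_zero_of_ne_bot hU
  by_contra hxa
  have htr : Transcendental K x := hxa
  have hpow : ∀ n : ℕ, x ^ n * u₀ ∈ U := by
    intro n
    induction n with
    | zero => simpa using hu₀U
    | succ n ih =>
        rw [pow_succ, mul_comm (x ^ n) x, mul_assoc]
        exact hx _ ih
  have hmem : ∀ p : Polynomial K, Polynomial.aeval x p * u₀ ∈ U := by
    intro p
    induction p using Polynomial.induction_on' with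
    | add p q hp hq => simpa [add_mul] using U.add_mem hp hq
    | monomial n a =>
        have h1 : Polynomial.aeval x (Polynomial.monomial n a) * u₀ = a • (x ^ n * u₀) := by
          rw [Polynomial.aeval_monomial, Algebra.smul_def, mul_assoc]
        rw [h1]
        exact U.smul_mem a (hpow n)
  set f : Polynomial K →ₗ[K] F :=
    (LinearMap.mulRight K u₀).comp (Polynomial.aeval x).toLinearMap with hf
  have hfinj : Function.Injective f := by
    have h1 : Function.Injective (Polynomial.aeval x : Polynomial K →ₐ[K] F) :=
      transcendental_iff_injective.mp htr
    have h2 : Function.Injective (fun y : F => y * u₀) := mul_left_injective₀ hu₀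
    intro p q hpq
    exact h1 (h2 hpq)
  set g : Polynomial K →ₗ[K] U := LinearMap.codRestrict U f hmem with hg
  have hginj : Function.Injective g := by
    intro p q h
    apply hfinj
    exact congrArg Subtype.val h
  have : FiniteDimensional K (Polynomial K) := FiniteDimensional.of_injective g hginj
  exact Polynomial.not_finite this

/-- Multiplication by a nonzero element as a `K`-linear automorphism of `F`. -/
noncomputable def mulLeftEquiv (e : F) (he : e ≠ 0) : F ≃ₗ[K] F :=
  LinearEquiv.ofLinear (LinearMap.mulLeft K e) (LinearMap.mulLeft K e⁻¹)
    (by ext y; simp [← mul_assoc, mul_inv_cancel₀ he])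
    (by ext y; simp [← mul_assoc, inv_mul_cancel₀ he])

lemma mulLeftEquiv_toLinearMap (e : F) (he : e ≠ 0) :
    ((mulLeftEquiv e he : F ≃ₗ[K] F) : F →ₗ[K] F) = LinearMap.mulLeft K e := rfl

lemma finrank_map_mulLeft (e : F) (he : e ≠ 0) (W : Submodule K F) :
    finrank K (W.map (LinearMap.mulLeft K e)) = finrank K W := by
  rw [← mulLeftEquiv_toLinearMap e he]
  exact LinearEquiv.finrank_map_eq (mulLeftEquiv e he) W

lemma map_mulLeft_inv_cancel (e : F) (he : e ≠ 0) (W : Submodule K F) :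
    (W.map (LinearMap.mulLeft K e⁻¹)).map (LinearMap.mulLeft K e) = W := by
  rw [← Submodule.map_comp]
  have h : (LinearMap.mulLeft K e).comp (LinearMap.mulLeft K e⁻¹) = (LinearMap.id : F →ₗ[K] F) := by
    ext y; simp [← mul_assoc, mul_inv_cancel₀ he]
  rw [h, Submodule.map_id]

lemma mulLeft_injective (e : F) (he : e ≠ 0) :
    Function.Injective (LinearMap.mulLeft K e) := by
  intro a b hab
  simp only [LinearMap.mulLeft_apply] at hab
  exact mul_left_cancel₀ he hab

/-- The key induction: linear Cauchy–Davenport under the no-finite-subextension hypothesis. -/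
lemma aux_cd (halg : ∀ x : F, IsAlgebraic K x → ∃ c : K, algebraMap K F c = x) :
    ∀ n : ℕ, ∀ U V : Submodule K F, finrank K V ≤ n → U ≠ ⊥ → V ≠ ⊥ →
      FiniteDimensional K U → FiniteDimensional K V →
      finrank K U + finrank K V ≤ finrank K (U * V) + 1 := by
  intro n
  induction n with
  | zero =>
      intro U V hn hU hV _ _
      exact absurd (Submodule.finrank_eq_zero.mp (Nat.le_zero.mp hn)) hV
  | succ n ih =>
      intro U V hn hU hV hfdU hfdV
      obtain ⟨u₀, hu₀U, hu₀⟩ := Submodule.exists_mem_ne_zero_of_ne_bot hU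
      obtain ⟨v₀, hv₀V, hv₀⟩ := Submodule.exists_mem_ne_zero_of_ne_bot hV
      by_cases hcase : ∀ x ∈ V, ∀ u ∈ U, ∃ u' ∈ U, x * u = v₀ * u'
      · -- degenerate case: V = K·v₀
        have hVle : V ≤ Submodule.span K {v₀} := by
          intro x hx
          have hstab : ∀ u ∈ U, (v₀⁻¹ * x) * u ∈ U := by
            intro u hu
            obtain ⟨u', hu', heq⟩ := hcase x hx u hu
            have h2 : (v₀⁻¹ * x) * u = u' := by
              rw [mul_assoc, heq, ← mul_assoc, inv_mul_cancel₀ hv₀, one_mul]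
            rw [h2]; exact hu'
          obtain ⟨c, hc⟩ := halg _ (isAlgebraic_of_mul_stab U hU _ hstab)
          have hxe : x = c • v₀ := by
            have h3 : v₀ * (v₀⁻¹ * x) = x := by
              rw [← mul_assoc, mul_inv_cancel₀ hv₀, one_mul]
            rw [← h3, ← hc, Algebra.smul_def, mul_comm]
          rw [hxe]
          exact Submodule.smul_mem _ _ (Submodule.mem_span_singleton_self v₀)
        have hVeq : V = Submodule.span K {v₀} :=
          le_antisymm hVle ((Submodule.span_singleton_le_iff_mem v₀ V).mpr hv₀V)
        have hrV : finrank K V = 1 := by rw [hVeq]; exact finrank_span_singleton hv₀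
        have hUV : U * V = U.map (LinearMap.mulLeft K v₀) := by
          rw [hVeq, mul_comm]
          ext y
          simp only [Submodule.mem_span_singleton_mul, Submodule.mem_map,
            LinearMap.mulLeft_apply]
        rw [hrV, hUV, finrank_map_mulLeft v₀ hv₀]
      · -- e-transform case
        push_neg at hcase
        obtain ⟨x, hxV, u, huU, hx⟩ := hcase
        have hu : u ≠ 0 := by
          rintro rfl
          exact hx 0 U.zero_mem (by simp)
        set e : F := u * v₀⁻¹ with he_def
        have he : e ≠ 0 := mul_ne_zero hu (inv_ne_zero hv₀)
        have hei : e⁻¹ = v₀ * u⁻¹ := by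
          rw [he_def, mul_inv, inv_inv, mul_comm]
        set eV : Submodule K F := V.map (LinearMap.mulLeft K e) with heV
        set eiU : Submodule K F := U.map (LinearMap.mulLeft K e⁻¹) with heiU
        set U' : Submodule K F := U ⊔ eV with hU'def
        set V' : Submodule K F := V ⊓ eiU with hV'def
        -- v₀ ∈ V'
        have hv₀V' : v₀ ∈ V' := by
          refine Submodule.mem_inf.mpr ⟨hv₀V, ?_⟩
          refine Submodule.mem_map.mpr ⟨u, huU, ?_⟩
          simp only [LinearMap.mulLeft_apply, hei]
          rw [mul_assoc, inv_mul_cancel₀ hu, mul_one]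
        have hV'bot : V' ≠ ⊥ := by
          intro h
          rw [h] at hv₀V'
          exact hv₀ ((Submodule.mem_bot K).mp hv₀V')
        -- x ∈ V but x ∉ V'
        have hxV' : x ∉ V' := by
          intro hxmem
          obtain ⟨u', hu', heq⟩ := Submodule.mem_map.mp (Submodule.mem_inf.mp hxmem).2
          apply hx u' hu'
          rw [← heq]
          simp only [LinearMap.mulLeft_apply, hei]
          rw [mul_assoc (v₀ * u⁻¹) u' u, mul_comm u' u, mul_assoc v₀ u⁻¹ (u * u'),
            ← mul_assoc u⁻¹ u u', inv_mul_cancel₀ hu, one_mul]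
        have hV'lt : V' < V := lt_of_le_of_ne inf_le_left (fun h => hxV' (h ▸ hxV))
        -- finite dimensionality
        haveI : FiniteDimensional K eV := Module.Finite.map V (LinearMap.mulLeft K e)
        haveI : FiniteDimensional K U' := Submodule.finiteDimensional_sup U eV
        haveI : FiniteDimensional K V' := Submodule.finiteDimensional_of_le inf_le_left
        haveI : FiniteDimensional K (U ⊓ eV : Submodule K F) :=
          Submodule.finiteDimensional_of_le inf_le_left
        -- finrank V' < finrank V
        have hlt : finrank K V' < finrank K V := Submodule.finrank_lt_finrank_of_lt hV'lt
        have hV'n : finrank K V' ≤ n := by omega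
        -- U' ≠ ⊥
        have hU'bot : U' ≠ ⊥ := by
          intro h
          exact hU (le_bot_iff.mp (le_trans le_sup_left h.le))
        -- dimension bookkeeping
        have hsum : finrank K U' + finrank K V' = finrank K U + finrank K V := by
          have h1 : finrank K U' + finrank K (U ⊓ eV : Submodule K F)
              = finrank K U + finrank K eV :=
            Submodule.finrank_sup_add_finrank_inf_eq U eV
          have h2 : finrank K eV = finrank K V := finrank_map_mulLeft e he V
          have h3 : finrank K V' = finrank K (U ⊓ eV : Submodule K F) := by
            have hmap : V'.map (LinearMap.mulLeft K e) = eV ⊓ U := by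
              rw [hV'def, Submodule.map_inf _ (mulLeft_injective e he), heiU,
                map_mulLeft_inv_cancel e he]
            calc finrank K V' = finrank K (V'.map (LinearMap.mulLeft K e)) :=
                  (finrank_map_mulLeft e he V').symm
              _ = finrank K (eV ⊓ U : Submodule K F) := by rw [hmap]
              _ = finrank K (U ⊓ eV : Submodule K F) := by rw [inf_comm]
          omega
        -- product inclusion
        have hprod : U' * V' ≤ U * V := by
          rw [hU'def, Submodule.sup_mul]
          apply sup_le
          · exact mul_le_mul_right inf_le_left _
          · refine le_trans (mul_le_mul_right (inf_le_right : V' ≤ eiU) _) ?_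
            refine Submodule.mul_le.mpr ?_
            rintro m hm w hw
            obtain ⟨v, hv, rfl⟩ := Submodule.mem_map.mp hm
            obtain ⟨u', hu', rfl⟩ := Submodule.mem_map.mp hw
            have hval : (LinearMap.mulLeft K e v) * (LinearMap.mulLeft K e⁻¹ u') = u' * v := by
              simp only [LinearMap.mulLeft_apply]
              rw [mul_mul_mul_comm e v e⁻¹ u', mul_inv_cancel₀ he, one_mul, mul_comm]
            rw [hval]
            exact Submodule.mul_mem_mul hu' hv
        -- finish
        haveI hfdUV : FiniteDimensional K (U * V : Submodule K F) :=
          Module.Finite.iff_fg.mpr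
            (Submodule.FG.mul (Module.Finite.iff_fg.mp hfdU) (Module.Finite.iff_fg.mp hfdV))
        calc finrank K U + finrank K V = finrank K U' + finrank K V' := hsum.symm
          _ ≤ finrank K (U' * V') + 1 :=
              ih U' V' hV'n hU'bot hV'bot inferInstance inferInstance
          _ ≤ finrank K (U * V : Submodule K F) + 1 :=
              Nat.add_le_add_right (Submodule.finrank_mono hprod) 1

end Aux

/-- **Cauchy–Davenport for field extensions.**  If `F/K` contains no finite
extension of `K` other than `K` itself, and `U, V` are nonzero
finite-dimensional `K`-subspaces of `F`, then
`dim_K (UV) ≥ dim_K U + dim_K V - 1`. -/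
theorem dim_mul_ge_of_no_finite_subextension
    {K F : Type*} [Field K] [Field F] [Algebra K F]
    (halg : ∀ x : F, IsAlgebraic K x → ∃ c : K, algebraMap K F c = x)
    (U V : Submodule K F) (hU : U ≠ ⊥) (hV : V ≠ ⊥)
    [FiniteDimensional K U] [FiniteDimensional K V] :
    Module.finrank K U + Module.finrank K V ≤ Module.finrank K (U * V) + 1 := by
  exact aux_cd halg (Module.finrank K V) U V le_rfl hU hV ‹_› ‹_›
end

section
/- Let E ⊆ M be fields and A, B nonzero finite-dimensional E-subspaces of M. Then the stabiliser St(AB) = {x ∈ M : x·AB ⊆ AB} is a subfield of M containing E, of finite dimension over E. -/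
/-- The stabiliser `St(AB) = {x ∈ M : x·AB ⊆ AB}` of the product of two
nonzero finite-dimensional `E`-subspaces `A, B` of a field extension `M/E`
is a subfield of `M` containing `E`, of finite dimension over `E`. -/
theorem stabiliser_is_finite_dimensional_subfield
    {E M : Type*} [Field E] [Field M] [Algebra E M]
    (A B : Submodule E M) (hA : A ≠ ⊥) (hB : B ≠ ⊥)
    [FiniteDimensional E A] [FiniteDimensional E B] :
    ∃ L : IntermediateField E M,
      (L : Set M) = {x : M | ∀ y ∈ A * B, x * y ∈ A * B} ∧
      FiniteDimensional E L := by
  set C : Submodule E M := A * B with hCdef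
  have hCfg : C.FG := Submodule.FG.mul (Module.Finite.iff_fg.mp ‹_›)
    (Module.Finite.iff_fg.mp ‹_›)
  have hCfin : FiniteDimensional E C := Module.Finite.iff_fg.mpr hCfg
  -- C is nonzero
  obtain ⟨a, haA, ha0⟩ := Submodule.exists_mem_ne_zero_of_ne_bot hA
  obtain ⟨b, hbB, hb0⟩ := Submodule.exists_mem_ne_zero_of_ne_bot hB
  have hab : a * b ∈ C := Submodule.mul_mem_mul haA hbB
  have hab0 : a * b ≠ 0 := mul_ne_zero ha0 hb0
  -- the stabiliser as a subalgebra
  let S : Subalgebra E M :=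
  { carrier := {x : M | ∀ y ∈ C, x * y ∈ C}
    mul_mem' := fun {x z} hx hz y hy => by
      rw [mul_assoc]; exact hx _ (hz _ hy)
    one_mem' := fun y hy => by simpa using hy
    add_mem' := fun {x z} hx hz y hy => by
      rw [add_mul]; exact C.add_mem (hx _ hy) (hz _ hy)
    zero_mem' := fun y hy => by simpa using C.zero_mem
    algebraMap_mem' := fun e y hy => by
      rw [← Algebra.smul_def]; exact C.smul_mem e hy }
  have hinv : ∀ x ∈ S, x⁻¹ ∈ S := by
    intro x hx y hy
    rcases eq_or_ne x 0 with rfl | hx0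
    · simpa using C.zero_mem
    -- multiplication by x on C is injective, hence surjective
    let f : C →ₗ[E] C :=
    { toFun := fun c => ⟨x * c, hx _ c.2⟩
      map_add' := fun c d => by ext; simp [mul_add]
      map_smul' := fun e c => by ext; simp [Algebra.mul_smul_comm] }
    have hinj : Function.Injective f := by
      intro c d h
      have := congrArg (Subtype.val) h
      simp only [f] at this
      exact Subtype.ext (mul_left_cancel₀ hx0 this)
    have hsurj : Function.Surjective f :=
      (LinearMap.injective_iff_surjective (f := f)).mp hinj
    obtain ⟨c, hc⟩ := hsurj ⟨y, hy⟩
    have hc' : x * (c : M) = y := congrArg Subtype.val hc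
    have : (x⁻¹ : M) * y = c := by
      rw [← hc', ← mul_assoc, inv_mul_cancel₀ hx0, one_mul]
    rw [this]; exact c.2
  refine ⟨S.toIntermediateField hinv, rfl, ?_⟩
  -- finite dimensionality: embed L into C via multiplication by a*b
  let L := S.toIntermediateField hinv
  let g : L →ₗ[E] C :=
  { toFun := fun x => ⟨(x : M) * (a * b), x.2 _ hab⟩
    map_add' := fun x z => by ext; simp [add_mul]
    map_smul' := fun e x => by ext; simp [Algebra.smul_mul_assoc] }
  have hginj : Function.Injective g := by
    intro x z h
    have := congrArg Subtype.val h
    simp only [g] at this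
    exact Subtype.ext (mul_right_cancel₀ hab0 this)
  exact FiniteDimensional.of_injective g hginj
end
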